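/- (Lemma 1) Let y₁, …, y_N ∈ ℝ^d and for σ > 0 define the noised empirical density p_σ(x) = (1/N) Σ_{i=1}^N N(x; y_i, σ²I_d). Then for every x ∈ ℝ^d and σ > 0, log p_{√2·σ}(x) ≥ ∫_{ℝ^d} log p_σ(x + σn) · N(n; 0, I_d) dn; that is, the log-density at the inflated noise level √2·σ is bounded below by the expectation over n ~ N(0, I_d) of the log-density at noise level σ evaluated at x + σn. -/

import Mathlib

open MeasureTheory

/-- The isotropic Gaussian density `N(x; μ, σ²I_d)` on `ℝ^d`. -/
noncomputable def gaussPdf (d : ℕ) (σ : ℝ) (μ x : EuclideanSpace ℝ (Fin d)) : ℝ :=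
  (2 * Real.pi * σ ^ 2) ^ (-(d : ℝ) / 2) * Real.exp (-‖x - μ‖ ^ 2 / (2 * σ ^ 2))

/-- The noised empirical density `p_σ(x) = (1/N) Σᵢ N(x; yᵢ, σ²I_d)`. -/
noncomputable def noisedDensity (d N : ℕ) (y : Fin N → EuclideanSpace ℝ (Fin d)) (σ : ℝ)
    (x : EuclideanSpace ℝ (Fin d)) : ℝ :=
  (1 / N) * ∑ i, gaussPdf d σ (y i) x

/-! Since `log` is concave, Jensen's inequality for the standard Gaussian weight bounds the
right-hand side by `log ∫ p_σ(x + σn) N(n; 0, I) dn`; we use it in the form of the tangent-line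
bound `log t ≤ log c - 1 + t / c` at the mean `c`. That integral equals `p_{√2σ}(x)`: completing
the square factors `N(x + σn; y, σ²I) N(n; 0, I)` as `N(x; y, 2σ²I) N(n; (y - x)/(2σ), I/2)`.
The integrability of `log p_σ(x + σn)` against the Gaussian comes from the bounds
`N(x + σn; y₁, σ²I) / N ≤ p_σ(x + σn) ≤ (2πσ²)^(-d/2)`, whose logarithms are quadratic in `n`. -/

open Real

theorem integral_log_mul_le_log_integral_mul {α : Type*} [MeasurableSpace α] {μ : Measure α}
    {f w : α → ℝ} (hf : ∀ a, 0 < f a) (hw : ∀ a, 0 ≤ w a) (hw_int : Integrable w μ)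
    (hw_one : ∫ a, w a ∂μ = 1) (hfw : Integrable (fun a ↦ f a * w a) μ)
    (hlog : Integrable (fun a ↦ log (f a) * w a) μ) :
    ∫ a, log (f a) * w a ∂μ ≤ log (∫ a, f a * w a ∂μ) := by
  set c := ∫ a, f a * w a ∂μ
  have hc : 0 < c := by
    have hsupp : Function.support (fun a ↦ f a * w a) = Function.support w := by
      ext a; simp [(hf a).ne']
    rw [integral_pos_iff_support_of_nonneg (fun a ↦ mul_nonneg (hf a).le (hw a)) hfw, hsupp,
      ← integral_pos_iff_support_of_nonneg hw hw_int, hw_one]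
    exact one_pos
  have htangent : ∀ a, log (f a) * w a ≤ (log c - 1) * w a + f a * w a / c := by
    intro a
    have h := log_le_sub_one_of_pos (div_pos (hf a) hc)
    rw [log_div (hf a).ne' hc.ne'] at h
    calc log (f a) * w a ≤ (log c - 1 + f a / c) * w a :=
          mul_le_mul_of_nonneg_right (by linarith) (hw a)
      _ = (log c - 1) * w a + f a * w a / c := by ring
  calc ∫ a, log (f a) * w a ∂μ ≤ ∫ a, (log c - 1) * w a + f a * w a / c ∂μ :=
        integral_mono hlog ((hw_int.const_mul _).add (hfw.div_const c)) htangent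
    _ = log c := by
        rw [integral_add (hw_int.const_mul _) (hfw.div_const c), integral_const_mul, integral_div,
          hw_one, div_self hc.ne']
        ring

section GaussianMoments

variable {E : Type*} [NormedAddCommGroup E] [InnerProductSpace ℝ E] [FiniteDimensional ℝ E]
  [MeasurableSpace E] [BorelSpace E]

theorem integrable_exp_neg_mul_sq_norm {b : ℝ} (hb : 0 < b) :
    Integrable (fun v : E ↦ exp (-b * ‖v‖ ^ 2)) := by
  have h := (GaussianFourier.integrable_cexp_neg_mul_sq_norm_add (V := E) (b := (b : ℂ))
    (by simpa) 0 0).norm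
  convert h using 2 with v
  simp [Complex.norm_exp, ← Complex.ofReal_pow]

theorem integrable_sq_norm_mul_exp_neg_mul_sq_norm {b : ℝ} (hb : 0 < b) :
    Integrable (fun v : E ↦ ‖v‖ ^ 2 * exp (-b * ‖v‖ ^ 2)) := by
  refine ((integrable_exp_neg_mul_sq_norm (E := E) (half_pos hb)).const_mul (2 / b)).mono'
    (by fun_prop) (ae_of_all _ fun v ↦ ?_)
  -- `t ≤ exp t` at `t = b‖v‖²/2` trades half of the Gaussian decay for the factor `‖v‖²`
  have ht := add_one_le_exp (b / 2 * ‖v‖ ^ 2)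
  have hsplit : exp (-b * ‖v‖ ^ 2) = exp (-(b / 2) * ‖v‖ ^ 2) * exp (-(b / 2) * ‖v‖ ^ 2) := by
    rw [← exp_add]; ring_nf
  have hinv : exp (-(b / 2) * ‖v‖ ^ 2) * exp (b / 2 * ‖v‖ ^ 2) = 1 := by
    rw [← exp_add]; ring_nf; exact exp_zero
  rw [Real.norm_of_nonneg (by positivity), hsplit]
  have hpos := exp_pos (-(b / 2) * ‖v‖ ^ 2)
  have hbound : ‖v‖ ^ 2 * exp (-(b / 2) * ‖v‖ ^ 2) ≤ 2 / b := by
    rw [le_div_iff₀ hb]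
    nlinarith [mul_le_mul_of_nonneg_left ht hpos.le, sq_nonneg ‖v‖]
  calc ‖v‖ ^ 2 * (exp (-(b / 2) * ‖v‖ ^ 2) * exp (-(b / 2) * ‖v‖ ^ 2))
      = ‖v‖ ^ 2 * exp (-(b / 2) * ‖v‖ ^ 2) * exp (-(b / 2) * ‖v‖ ^ 2) := by ring
    _ ≤ 2 / b * exp (-(b / 2) * ‖v‖ ^ 2) := mul_le_mul_of_nonneg_right hbound hpos.le

end GaussianMoments

section Gaussian

variable {d : ℕ}

theorem gaussPdf_eq (σ : ℝ) (μ x : EuclideanSpace ℝ (Fin d)) :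
    gaussPdf d σ μ x = (2 * π * σ ^ 2) ^ (-(d : ℝ) / 2) * exp (-(2 * σ ^ 2)⁻¹ * ‖x - μ‖ ^ 2) := by
  rw [gaussPdf, neg_mul, ← div_eq_inv_mul, ← neg_div]

theorem gaussPdf_nonneg (σ : ℝ) (μ x : EuclideanSpace ℝ (Fin d)) : 0 ≤ gaussPdf d σ μ x := by
  unfold gaussPdf; positivity

theorem gaussPdf_pos {σ : ℝ} (hσ : σ ≠ 0) (μ x : EuclideanSpace ℝ (Fin d)) :
    0 < gaussPdf d σ μ x := by
  unfold gaussPdf; positivity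

theorem gaussPdf_le (σ : ℝ) (μ x : EuclideanSpace ℝ (Fin d)) :
    gaussPdf d σ μ x ≤ (2 * π * σ ^ 2) ^ (-(d : ℝ) / 2) := by
  unfold gaussPdf
  refine mul_le_of_le_one_right (by positivity) (exp_le_one_iff.mpr ?_)
  exact div_nonpos_of_nonpos_of_nonneg (by simp) (by positivity)

theorem log_gaussPdf {σ : ℝ} (hσ : σ ≠ 0) (μ x : EuclideanSpace ℝ (Fin d)) :
    log (gaussPdf d σ μ x)
      = log ((2 * π * σ ^ 2) ^ (-(d : ℝ) / 2)) - ‖x - μ‖ ^ 2 / (2 * σ ^ 2) := by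
  rw [gaussPdf, log_mul (by positivity) (exp_pos _).ne', log_exp]
  ring

theorem continuous_gaussPdf (σ : ℝ) (μ : EuclideanSpace ℝ (Fin d)) :
    Continuous (gaussPdf d σ μ) := by
  unfold gaussPdf; fun_prop

theorem integrable_gaussPdf {σ : ℝ} (hσ : σ ≠ 0) (μ : EuclideanSpace ℝ (Fin d)) :
    Integrable (gaussPdf d σ μ) := by
  simp_rw [funext (gaussPdf_eq σ μ)]
  exact ((integrable_exp_neg_mul_sq_norm (by positivity)).comp_sub_right μ).const_mul _

theorem integral_gaussPdf {σ : ℝ} (hσ : σ ≠ 0) (μ : EuclideanSpace ℝ (Fin d)) :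
    ∫ x, gaussPdf d σ μ x = 1 := by
  simp_rw [gaussPdf_eq σ μ]
  rw [integral_const_mul, integral_sub_right_eq_self (fun x ↦ exp (-(2 * σ ^ 2)⁻¹ * ‖x‖ ^ 2)) μ,
    GaussianFourier.integral_rexp_neg_mul_sq_norm (by positivity), finrank_euclideanSpace_fin,
    div_inv_eq_mul, show π * (2 * σ ^ 2) = 2 * π * σ ^ 2 by ring, ← rpow_add (by positivity),
    neg_div, neg_add_cancel, rpow_zero]

theorem integrable_sq_norm_mul_gaussPdf {σ : ℝ} (hσ : σ ≠ 0) :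
    Integrable (fun x ↦ ‖x‖ ^ 2 * gaussPdf d σ 0 x) := by
  simp_rw [gaussPdf_eq σ 0, sub_zero, mul_left_comm (‖_‖ ^ 2)]
  exact (integrable_sq_norm_mul_exp_neg_mul_sq_norm (by positivity)).const_mul _

theorem gaussPdf_add_smul_mul_gaussPdf {σ : ℝ} (hσ : σ ≠ 0) (y x n : EuclideanSpace ℝ (Fin d)) :
    gaussPdf d σ y (x + σ • n) * gaussPdf d 1 0 n
      = gaussPdf d (√2 * σ) y x * gaussPdf d (√2)⁻¹ ((2 * σ)⁻¹ • (y - x)) n := by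
  have h2 : (√2 : ℝ) ^ 2 = 2 := sq_sqrt zero_le_two
  unfold gaussPdf
  conv_lhs => rw [mul_mul_mul_comm, ← exp_add, ← mul_rpow (by positivity) (by positivity)]
  conv_rhs => rw [mul_mul_mul_comm, ← exp_add, ← mul_rpow (by positivity) (by positivity)]
  rw [mul_pow, inv_pow, h2]
  congr 2
  · ring
  · have hx : x + σ • n - y = (x - y) + σ • n := by abel
    have hn : n - 0 = n := sub_zero n
    have hμ : n - (2 * σ)⁻¹ • (y - x) = n + (2 * σ)⁻¹ • (x - y) := by
      rw [← neg_sub x y, smul_neg, sub_neg_eq_add]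
    rw [hx, hn, hμ, norm_add_sq_real, norm_add_sq_real, inner_smul_right, inner_smul_right,
      norm_smul, norm_smul, real_inner_comm n, Real.norm_eq_abs, Real.norm_eq_abs, mul_pow,
      mul_pow, sq_abs, sq_abs]
    field_simp
    ring

theorem integrable_gaussPdf_add_smul_mul_gaussPdf {σ : ℝ} (hσ : σ ≠ 0)
    (y x : EuclideanSpace ℝ (Fin d)) :
    Integrable (fun n ↦ gaussPdf d σ y (x + σ • n) * gaussPdf d 1 0 n) := by
  simp_rw [gaussPdf_add_smul_mul_gaussPdf hσ]
  exact (integrable_gaussPdf (by positivity) _).const_mul _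

theorem integral_gaussPdf_add_smul_mul_gaussPdf {σ : ℝ} (hσ : σ ≠ 0)
    (y x : EuclideanSpace ℝ (Fin d)) :
    ∫ n, gaussPdf d σ y (x + σ • n) * gaussPdf d 1 0 n = gaussPdf d (√2 * σ) y x := by
  simp_rw [gaussPdf_add_smul_mul_gaussPdf hσ]
  rw [integral_const_mul, integral_gaussPdf (by positivity), mul_one]

end Gaussian

section NoisedDensity

variable {d N : ℕ} (y : Fin N → EuclideanSpace ℝ (Fin d))

theorem noisedDensity_pos (hN : 0 < N) {σ : ℝ} (hσ : σ ≠ 0) (x : EuclideanSpace ℝ (Fin d)) :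
    0 < noisedDensity d N y σ x := by
  have : Nonempty (Fin N) := ⟨⟨0, hN⟩⟩
  exact mul_pos (by positivity)
    (Finset.sum_pos (fun i _ ↦ gaussPdf_pos hσ _ _) Finset.univ_nonempty)

theorem noisedDensity_le (σ : ℝ) (x : EuclideanSpace ℝ (Fin d)) :
    noisedDensity d N y σ x ≤ (2 * π * σ ^ 2) ^ (-(d : ℝ) / 2) := by
  calc noisedDensity d N y σ x ≤ (1 / N) * ∑ _i : Fin N, (2 * π * σ ^ 2) ^ (-(d : ℝ) / 2) :=
        mul_le_mul_of_nonneg_left (Finset.sum_le_sum fun i _ ↦ gaussPdf_le σ _ _) (by positivity)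
    _ = (N / N) * (2 * π * σ ^ 2) ^ (-(d : ℝ) / 2) := by
          rw [Finset.sum_const, Finset.card_univ, Fintype.card_fin, nsmul_eq_mul]; ring
    _ ≤ (2 * π * σ ^ 2) ^ (-(d : ℝ) / 2) :=
        mul_le_of_le_one_left (by positivity) (div_self_le_one _)

theorem gaussPdf_div_le_noisedDensity (σ : ℝ) (x : EuclideanSpace ℝ (Fin d)) (i : Fin N) :
    gaussPdf d σ (y i) x / N ≤ noisedDensity d N y σ x := by
  rw [noisedDensity, one_div_mul_eq_div]
  gcongr
  exact Finset.single_le_sum (fun j _ ↦ gaussPdf_nonneg σ (y j) x) (Finset.mem_univ i)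

theorem continuous_noisedDensity (σ : ℝ) : Continuous (noisedDensity d N y σ) := by
  unfold noisedDensity
  exact continuous_const.mul (continuous_finsetSum _ fun i _ ↦ continuous_gaussPdf σ (y i))

theorem log_gaussPdf_sub_log_le_log_noisedDensity {σ : ℝ} (hσ : σ ≠ 0) (i : Fin N)
    (x : EuclideanSpace ℝ (Fin d)) :
    log (gaussPdf d σ (y i) x) - log N ≤ log (noisedDensity d N y σ x) := by
  have hN : (0 : ℝ) < N := Nat.cast_pos.mpr i.pos
  rw [← log_div (gaussPdf_pos hσ _ _).ne' hN.ne']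
  exact log_le_log (div_pos (gaussPdf_pos hσ _ _) hN) (gaussPdf_div_le_noisedDensity y σ x i)

theorem integrable_noisedDensity_add_smul_mul_gaussPdf {σ : ℝ} (hσ : σ ≠ 0)
    (x : EuclideanSpace ℝ (Fin d)) :
    Integrable (fun n ↦ noisedDensity d N y σ (x + σ • n) * gaussPdf d 1 0 n) := by
  simp_rw [noisedDensity, mul_assoc, Finset.sum_mul]
  exact (integrable_finsetSum _ fun i _ ↦
    integrable_gaussPdf_add_smul_mul_gaussPdf hσ (y i) x).const_mul _

theorem integral_noisedDensity_add_smul_mul_gaussPdf {σ : ℝ} (hσ : σ ≠ 0)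
    (x : EuclideanSpace ℝ (Fin d)) :
    ∫ n, noisedDensity d N y σ (x + σ • n) * gaussPdf d 1 0 n
      = noisedDensity d N y (√2 * σ) x := by
  simp_rw [noisedDensity, mul_assoc, Finset.sum_mul]
  rw [integral_const_mul, integral_finsetSum _ fun i _ ↦
    integrable_gaussPdf_add_smul_mul_gaussPdf hσ (y i) x]
  simp_rw [integral_gaussPdf_add_smul_mul_gaussPdf hσ]

theorem integrable_log_noisedDensity_add_smul_mul_gaussPdf (hN : 0 < N) {σ : ℝ} (hσ : σ ≠ 0)
    (x : EuclideanSpace ℝ (Fin d)) :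
    Integrable (fun n ↦ log (noisedDensity d N y σ (x + σ • n)) * gaussPdf d 1 0 n) := by
  set C := (2 * π * σ ^ 2) ^ (-(d : ℝ) / 2)
  set φ := gaussPdf d 1 0
  set a := y ⟨0, hN⟩
  have hupper (n : EuclideanSpace ℝ (Fin d)) :
      log (noisedDensity d N y σ (x + σ • n)) * φ n ≤ log C * φ n :=
    mul_le_mul_of_nonneg_right (log_le_log (noisedDensity_pos y hN hσ _)
      (noisedDensity_le y σ _)) (gaussPdf_nonneg 1 0 n)
  have hlower (n : EuclideanSpace ℝ (Fin d)) :
      (log C - log N - ‖x - a‖ ^ 2 / σ ^ 2) * φ n - ‖n‖ ^ 2 * φ n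
        ≤ log (noisedDensity d N y σ (x + σ • n)) * φ n := by
    have hsq : ‖x + σ • n - a‖ ^ 2 ≤ 2 * (‖x - a‖ ^ 2 + σ ^ 2 * ‖n‖ ^ 2) := by
      rw [show x + σ • n - a = (x - a) + σ • n by abel, ← sq_abs σ, ← mul_pow, ← Real.norm_eq_abs,
        ← norm_smul]
      exact (pow_le_pow_left₀ (norm_nonneg _) (norm_add_le _ _) 2).trans add_sq_le
    have hlog := log_gaussPdf_sub_log_le_log_noisedDensity y hσ ⟨0, hN⟩ (x + σ • n)
    rw [log_gaussPdf hσ] at hlog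
    have hquad : ‖x + σ • n - a‖ ^ 2 / (2 * σ ^ 2) ≤ ‖x - a‖ ^ 2 / σ ^ 2 + ‖n‖ ^ 2 := by
      rw [div_le_iff₀ (by positivity)]
      field_simp
      linarith
    rw [← sub_mul]
    exact mul_le_mul_of_nonneg_right (by linarith) (gaussPdf_nonneg 1 0 n)
  have hφ := integrable_gaussPdf (d := d) one_ne_zero 0
  refine integrable_of_le_of_le ?_ (ae_of_all _ hlower) (ae_of_all _ hupper)
    ((hφ.const_mul _).sub (integrable_sq_norm_mul_gaussPdf one_ne_zero)) (hφ.const_mul _)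
  exact ((((continuous_noisedDensity y σ).comp (by fun_prop)).log fun n ↦
    (noisedDensity_pos y hN hσ _).ne').mul (continuous_gaussPdf 1 0)).aestronglyMeasurable

end NoisedDensity

/-- Lemma 1: the log-density at the inflated noise level `√2·σ` is bounded below by the
expectation over `n ~ N(0, I_d)` of the log-density at level `σ` evaluated at `x + σn`. -/
theorem log_noisedDensity_sqrt_two_ge (d N : ℕ) (hN : 0 < N)
    (y : Fin N → EuclideanSpace ℝ (Fin d)) (σ : ℝ) (hσ : 0 < σ)
    (x : EuclideanSpace ℝ (Fin d)) :
    Real.log (noisedDensity d N y (Real.sqrt 2 * σ) x)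
      ≥ ∫ n : EuclideanSpace ℝ (Fin d),
          Real.log (noisedDensity d N y σ (x + σ • n)) * gaussPdf d 1 0 n := by
  rw [ge_iff_le, ← integral_noisedDensity_add_smul_mul_gaussPdf y hσ.ne' x]
  exact integral_log_mul_le_log_integral_mul (fun n ↦ noisedDensity_pos y hN hσ.ne' _)
    (gaussPdf_nonneg 1 0) (integrable_gaussPdf one_ne_zero 0) (integral_gaussPdf one_ne_zero 0)
    (integrable_noisedDensity_add_smul_mul_gaussPdf y hσ.ne' x)
    (integrable_log_noisedDensity_add_smul_mul_gaussPdf y hN hσ.ne' x)
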